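/- arXiv:1202.0066 — 2 statements merged into one kernel-verified Lean document; each statement's English description precedes it below -/
import Mathlib

section
/- Let g be a finite-dimensional complex Lie algebra and let r be its solvable radical. Then the ideal [g, r] annihilates every finite-dimensional irreducible g-module; that is, for every finite-dimensional irreducible g-module V one has [g, r]·V = 0. -/
/-!
STATEMENT 0: Let `g` be a finite-dimensional complex Lie algebra and let `r` be its
solvable radical.  Then the ideal `[g, r]` annihilates every finite-dimensional
irreducible `g`-module `V`, i.e. `⁅x, v⁆ = 0` for every `x ∈ ⁅⊤, r⁆` and `v ∈ V`.
-/

open Module LieModule Submodule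

section TraceLemma

variable {L : Type} [LieRing L] [LieAlgebra ℂ L]
  {V : Type} [AddCommGroup V] [Module ℂ V] [LieRingModule L V] [LieModule ℂ L V]
  [FiniteDimensional ℂ V]

/-- The invariance ("trace") lemma: if `v ≠ 0` is a common eigenvector for an ideal `A`
with eigenvalue function `χ`, then `χ` vanishes on brackets `⁅x, a⁆`. -/
theorem weight_lie_eq_zero (A : LieIdeal ℂ L) (χ : A → ℂ) (v : V) (hv : v ≠ 0)
    (heig : ∀ a : A, ⁅(a : L), v⁆ = χ a • v)
    (x : L) (a b : A) (hab : (b : L) = ⁅x, (a : L)⁆) : χ b = 0 := by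
  classical
  set φ : L → Module.End ℂ V := fun y => LieModule.toEnd ℂ L V y with hφ
  set w : ℕ → V := fun k => ((φ x) ^ k) v with hw
  have hw0 : w 0 = v := by simp [hw]
  have hws : ∀ k, w (k + 1) = ⁅x, w k⁆ := by
    intro k
    show ((φ x) ^ (k + 1)) v = ⁅x, ((φ x) ^ k) v⁆
    rw [pow_succ', Module.End.mul_apply]
    rfl
  set U : ℕ → Submodule ℂ V := fun k => Submodule.span ℂ (w '' Set.Iio k) with hU
  have hUmono : Monotone U := by
    intro i j hij
    exact Submodule.span_mono (Set.image_mono (Set.Iio_subset_Iio hij))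
  have hwmem : ∀ {i k : ℕ}, i < k → w i ∈ U k := fun {i k} h =>
    Submodule.subset_span (Set.mem_image_of_mem w h)
  have hmapx : ∀ k, ∀ u ∈ U k, ⁅x, u⁆ ∈ U (k + 1) := by
    intro k u hu
    have : U k ≤ Submodule.comap (φ x) (U (k + 1)) := by
      rw [hU, Submodule.span_le]
      rintro - ⟨i, hi, rfl⟩
      simp only [SetLike.mem_coe, Submodule.mem_comap]
      have : (φ x) (w i) = w (i + 1) := by
        rw [hws i]; simp [hφ, LieModule.toEnd_apply_apply]
      rw [this]
      exact hwmem (by simpa using hi)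
    simpa [hφ, LieModule.toEnd_apply_apply] using this hu
  -- key claim
  have hkey : ∀ k (c : A), ⁅(c : L), w k⁆ - χ c • w k ∈ U k := by
    intro k
    induction k with
    | zero =>
      intro c
      rw [hw0, heig c, sub_self]
      exact Submodule.zero_mem _
    | succ k ih =>
      intro c
      have hc'mem : ⁅(c : L), x⁆ ∈ A := by
        rw [← lie_skew]
        exact neg_mem (A.lie_mem c.2)
      set c' : A := ⟨⁅(c : L), x⁆, hc'mem⟩ with hc'
      have e1 : ⁅(c : L), w (k + 1)⁆ - χ c • w (k + 1) =
          ((⁅(c' : L), w k⁆ - χ c' • w k) + χ c' • w k) + ⁅x, ⁅(c : L), w k⁆ - χ c • w k⁆ := by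
        rw [hws k, leibniz_lie]
        simp only [hc', lie_sub, lie_smul]
        abel
      rw [e1]
      refine add_mem (add_mem (hUmono (Nat.le_succ k) (ih c')) ?_) (hmapx k _ (ih c))
      exact Submodule.smul_mem _ _ (hwmem (Nat.lt_succ_self k))
  -- each element of A preserves each U k
  have hcU : ∀ (c : A) (k), ∀ u ∈ U k, ⁅(c : L), u⁆ ∈ U k := by
    intro c k u hu
    have : U k ≤ Submodule.comap (φ (c : L)) (U k) := by
      rw [hU, Submodule.span_le]
      rintro - ⟨i, hi, rfl⟩
      simp only [SetLike.mem_coe, Submodule.mem_comap]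
      have : (φ (c : L)) (w i) = (⁅(c : L), w i⁆ - χ c • w i) + χ c • w i := by
        simp [hφ, LieModule.toEnd_apply_apply]
      rw [this]
      refine add_mem (hUmono (le_of_lt (by simpa using hi)) (hkey i c)) ?_
      exact Submodule.smul_mem _ _ (hwmem (by simpa using hi))
    simpa [hφ, LieModule.toEnd_apply_apply] using this hu
  -- stabilization
  obtain ⟨n, hn⟩ := (monotone_stabilizes_iff_noetherian.mpr inferInstance) ⟨U, hUmono⟩
  set N := n + 1 with hN
  have hstab : U (N + 1) = U N := ((hn N (by omega)).symm.trans (hn (N + 1) (by omega))).symm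
  set UU : Submodule ℂ V := U N with hUU
  have hxUU : ∀ u ∈ UU, (φ x) u ∈ UU := by
    intro u hu
    have := hmapx N u hu
    rw [hstab] at this
    simpa [hφ, LieModule.toEnd_apply_apply] using this
  have haUU : ∀ u ∈ UU, (φ (a : L)) u ∈ UU := by
    intro u hu
    have := hcU a N u hu
    simpa [hφ, LieModule.toEnd_apply_apply] using this
  have hbUU : ∀ u ∈ UU, (φ (b : L)) u ∈ UU := by
    intro u hu
    have := hcU b N u hu
    simpa [hφ, LieModule.toEnd_apply_apply] using this
  set FX : Module.End ℂ UU := (φ x).restrict hxUU with hFX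
  set FA : Module.End ℂ UU := (φ (a : L)).restrict haUU with hFA
  set FB : Module.End ℂ UU := (φ (b : L)).restrict hbUU with hFB
  have hcomm : FB = FX * FA - FA * FX := by
    ext u
    have : ⁅(b : L), (u : V)⁆ = ⁅x, ⁅(a : L), (u : V)⁆⁆ - ⁅(a : L), ⁅x, (u : V)⁆⁆ := by
      rw [hab, lie_lie]
    simp only [hFB, hFX, hFA, LinearMap.sub_apply, Module.End.mul_apply,
      LinearMap.restrict_coe_apply, AddSubgroupClass.coe_sub]
    simpa [hφ, LieModule.toEnd_apply_apply] using this
  have htraceFB : LinearMap.trace ℂ UU FB = 0 := by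
    rw [hcomm, map_sub, LinearMap.trace_mul_comm]
    exact sub_self _
  -- nilpotency of S = FB - χ b • 1
  set S : Module.End ℂ UU := FB - χ b • 1 with hS
  have hψ : ∀ k, ∀ u ∈ U (k + 1), ⁅(b : L), u⁆ - χ b • u ∈ U k := by
    intro k u hu
    set ψ : Module.End ℂ V := φ (b : L) - χ b • 1 with hψdef
    have : U (k + 1) ≤ Submodule.comap ψ (U k) := by
      rw [hU, Submodule.span_le]
      rintro - ⟨i, hi, rfl⟩
      simp only [SetLike.mem_coe, Submodule.mem_comap]
      have hψw : ψ (w i) = ⁅(b : L), w i⁆ - χ b • w i := by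
        simp [hψdef, hφ, LieModule.toEnd_apply_apply]
      rw [hψw]
      exact hUmono (by simpa [Nat.lt_succ_iff] using hi) (hkey i b)
    have := this hu
    simpa [hψdef, hφ, LieModule.toEnd_apply_apply] using this
  have hSdown : ∀ (u : UU) (k), (u : V) ∈ U (k + 1) → ((S u : UU) : V) ∈ U k := by
    intro u k hu
    have : ((S u : UU) : V) = ⁅(b : L), (u : V)⁆ - χ b • (u : V) := by
      simp [hS, hFB, LinearMap.restrict_coe_apply, hφ, LieModule.toEnd_apply_apply,
        Module.End.one_apply]
    rw [this]
    exact hψ k _ hu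
  have hU0 : U 0 = ⊥ := by
    have h0 : Set.Iio (0 : ℕ) = ∅ := by ext i; simp
    simp [hU, h0]
  have hSk : ∀ (k : ℕ) (u : UU), (u : V) ∈ U k → ((S ^ k) u : V) = 0 := by
    intro k
    induction k with
    | zero =>
      intro u hu
      rw [hU0] at hu
      simpa using hu
    | succ k ih =>
      intro u hu
      have h1 : ((S u : UU) : V) ∈ U k := hSdown u k hu
      have : (S ^ (k + 1)) u = (S ^ k) (S u) := by
        rw [pow_succ (M := Module.End ℂ UU)]
        simp [Module.End.mul_apply]
      rw [this]
      exact ih (S u) h1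
  have hSnil : IsNilpotent S := by
    refine ⟨N, ?_⟩
    ext u
    have : (u : V) ∈ U N := u.2
    simpa using hSk N u this
  have htraceS : LinearMap.trace ℂ UU S = 0 :=
    (LinearMap.isNilpotent_trace_of_isNilpotent hSnil).eq_zero
  have hFBtr : LinearMap.trace ℂ UU FB = χ b * (finrank ℂ UU : ℂ) := by
    have : FB = S + χ b • 1 := by rw [hS]; abel
    rw [this, map_add, htraceS, zero_add, map_smul, LinearMap.trace_one]
    simp [mul_comm]
  have hfr : (0 : ℕ) < finrank ℂ UU := by
    have hvU : v ∈ UU := by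
      rw [hUU, ← hw0]
      exact hwmem (by omega)
    have : Nontrivial UU := ⟨⟨⟨v, hvU⟩, 0, by simpa [Subtype.ext_iff] using hv⟩⟩
    exact finrank_pos
  rw [htraceFB] at hFBtr
  have : χ b = 0 ∨ (finrank ℂ UU : ℂ) = 0 := mul_eq_zero.mp hFBtr.symm
  rcases this with h | h
  · exact h
  · exact absurd h (by exact_mod_cast hfr.ne')

end TraceLemma

section LieTheorem

/-- Lie's theorem: a solvable Lie algebra over `ℂ` acting on a nonzero finite-dimensional
module has a common eigenvector. -/
theorem lie_theorem_aux : ∀ (n : ℕ) (L : Type) [LieRing L] [LieAlgebra ℂ L]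
    [FiniteDimensional ℂ L] [LieAlgebra.IsSolvable L], finrank ℂ L ≤ n →
    ∀ (V : Type) [AddCommGroup V] [Module ℂ V] [LieRingModule L V] [LieModule ℂ L V]
    [FiniteDimensional ℂ V] [Nontrivial V],
    ∃ (χ : L → ℂ) (v : V), v ≠ 0 ∧ ∀ y : L, ⁅y, v⁆ = χ y • v := by
  intro n
  induction n with
  | zero =>
    intro L _ _ _ _ hle V _ _ _ _ _ _
    have hsub : Subsingleton L := finrank_zero_iff.mp (Nat.le_zero.mp hle)
    obtain ⟨v, hv⟩ := exists_ne (0 : V)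
    exact ⟨0, v, hv, fun y => by rw [Subsingleton.elim y 0]; simp⟩
  | succ n IH =>
    intro L _ _ _ _ hle V _ _ _ _ _ _
    by_cases hL : Nontrivial L
    case neg =>
      have hsub : Subsingleton L := not_nontrivial_iff_subsingleton.mp hL
      obtain ⟨v, hv⟩ := exists_ne (0 : V)
      exact ⟨0, v, hv, fun y => by rw [Subsingleton.elim y 0]; simp⟩
    case pos =>
    haveI := hL
    have hD : LieAlgebra.derivedSeries ℂ L 1 < ⊤ :=
      LieAlgebra.derivedSeries_lt_top_of_solvable ℂ L
    obtain ⟨z, -, hz⟩ := SetLike.exists_of_lt hD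
    have hzmem : z ∉ (LieAlgebra.derivedSeries ℂ L 1).toSubmodule := hz
    obtain ⟨f0, hf0ne, hf0map⟩ :=
      Submodule.exists_dual_map_eq_bot_of_notMem hzmem inferInstance
    have hker0 : (LieAlgebra.derivedSeries ℂ L 1).toSubmodule ≤ LinearMap.ker f0 := by
      intro u hu
      rw [LinearMap.mem_ker]
      have h1 : f0 u ∈ Submodule.map f0 (LieAlgebra.derivedSeries ℂ L 1).toSubmodule :=
        Submodule.mem_map_of_mem hu
      rw [hf0map] at h1
      simpa using h1
    set f : L →ₗ[ℂ] ℂ := (f0 z)⁻¹ • f0 with hf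
    have hfz : f z = 1 := by
      simp [hf, inv_mul_cancel₀ hf0ne]
    have hker : (LieAlgebra.derivedSeries ℂ L 1).toSubmodule ≤ LinearMap.ker f := by
      intro u hu
      have := hker0 hu
      simp only [LinearMap.mem_ker] at this ⊢
      simp [hf, this]
    have hderived : ∀ x m : L, ⁅x, m⁆ ∈ LieAlgebra.derivedSeries ℂ L 1 := by
      intro x m
      rw [LieAlgebra.derivedSeries_def, LieAlgebra.derivedSeriesOfIdeal_succ,
        LieAlgebra.derivedSeriesOfIdeal_zero]
      exact LieSubmodule.lie_mem_lie (LieSubmodule.mem_top x) (LieSubmodule.mem_top m)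
    set A : LieIdeal ℂ L :=
      { toSubmodule := LinearMap.ker f
        lie_mem := fun {x m} _ => hker (hderived x m) } with hA
    have hmemA : ∀ {u : L}, u ∈ A ↔ f u = 0 := fun {u} => Iff.rfl
    haveI hAsolv : LieAlgebra.IsSolvable A := by
      rw [LieAlgebra.LieIdeal.solvable_iff_le_radical, LieAlgebra.radical_eq_top_of_isSolvable]
      exact le_top
    have hfsurj : Function.Surjective f := by
      intro c
      exact ⟨c • z, by simp [hfz]⟩
    have hfinA : finrank ℂ A ≤ n := by
      have h1 : finrank ℂ (LinearMap.range f) + finrank ℂ (LinearMap.ker f) = finrank ℂ L :=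
        LinearMap.finrank_range_add_finrank_ker f
      have h2 : LinearMap.range f = ⊤ := LinearMap.range_eq_top.mpr hfsurj
      rw [h2] at h1
      have h3 : finrank ℂ (⊤ : Submodule ℂ ℂ) = 1 := by simp
      have h4 : finrank ℂ A = finrank ℂ (LinearMap.ker f) := rfl
      omega
    obtain ⟨χ₀, v₀, hv₀, heig₀⟩ := IH A hfinA V
    have heig₀' : ∀ a : A, ⁅(a : L), v₀⁆ = χ₀ a • v₀ := by
      intro a
      rw [← heig₀ a, LieIdeal.coe_bracket_of_module]
    have hχ₀ := weight_lie_eq_zero A χ₀ v₀ hv₀ heig₀'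
    set W : Submodule ℂ V :=
      ⨅ (c : A), LinearMap.ker (LieModule.toEnd ℂ L V (c : L) - χ₀ c • 1) with hW
    have hmemW : ∀ {u : V}, u ∈ W ↔ ∀ c : A, ⁅(c : L), u⁆ = χ₀ c • u := by
      intro u
      simp only [hW, Submodule.mem_iInf, LinearMap.mem_ker, LinearMap.sub_apply,
        LieModule.toEnd_apply_apply, LinearMap.smul_apply, Module.End.one_apply, sub_eq_zero]
    have hv₀W : v₀ ∈ W := hmemW.mpr heig₀'
    have hWstab : ∀ (y : L) (u : V), u ∈ W → ⁅y, u⁆ ∈ W := by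
      intro y u hu
      rw [hmemW] at hu ⊢
      intro c
      have hmem1 : ⁅(c : L), y⁆ ∈ A := by
        rw [← lie_skew]
        exact neg_mem (A.lie_mem c.2)
      set c' : A := ⟨⁅(c : L), y⁆, hmem1⟩ with hc'
      have hc'0 : χ₀ c' = 0 := by
        refine hχ₀ y (-c) c' ?_
        show ⁅(c : L), y⁆ = ⁅y, ((-c : A) : L)⁆
        have : ((-c : A) : L) = -(c : L) := rfl
        rw [this, lie_neg, lie_skew]
      calc ⁅(c : L), ⁅y, u⁆⁆ = ⁅⁅(c : L), y⁆, u⁆ + ⁅y, ⁅(c : L), u⁆⁆ := leibniz_lie _ _ _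
        _ = χ₀ c' • u + ⁅y, χ₀ c • u⁆ := by
              have h1 : ⁅⁅(c : L), y⁆, u⁆ = χ₀ c' • u := hu c'
              rw [h1, hu c]
        _ = χ₀ c • ⁅y, u⁆ := by rw [hc'0, zero_smul, zero_add, lie_smul]
    haveI : Nontrivial W := ⟨⟨⟨v₀, hv₀W⟩, 0, fun h => hv₀ (congrArg Subtype.val h)⟩⟩
    have hzW : ∀ u ∈ W, (LieModule.toEnd ℂ L V z) u ∈ W := by
      intro u hu
      rw [LieModule.toEnd_apply_apply]
      exact hWstab z u hu
    set EZ : Module.End ℂ W := (LieModule.toEnd ℂ L V z).restrict hzW with hEZ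
    obtain ⟨c, hc⟩ := Module.End.exists_eigenvalue EZ
    obtain ⟨w', hw'⟩ := hc.exists_hasEigenvector
    have hw'ne : (w' : V) ≠ 0 := fun h => hw'.2 (Subtype.ext h)
    have hzw' : ⁅z, (w' : V)⁆ = c • (w' : V) := by
      have h1 : EZ w' = c • w' := hw'.apply_eq_smul
      have h2 : ((EZ w' : W) : V) = ⁅z, (w' : V)⁆ := by
        simp [hEZ, LinearMap.restrict_coe_apply, LieModule.toEnd_apply_apply]
      rw [h1] at h2
      rw [← h2]
      rfl
    have hmemay : ∀ y : L, y - f y • z ∈ A := by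
      intro y
      rw [hmemA]
      simp [map_sub, map_smul, hfz]
    refine ⟨fun y => χ₀ ⟨y - f y • z, hmemay y⟩ + f y * c, (w' : V), hw'ne, ?_⟩
    intro y
    have hdecomp : y = (y - f y • z) + f y • z := by abel
    have hWw' : (w' : V) ∈ W := w'.2
    calc ⁅y, (w' : V)⁆ = ⁅(y - f y • z) + f y • z, (w' : V)⁆ := by rw [← hdecomp]
      _ = ⁅y - f y • z, (w' : V)⁆ + f y • ⁅z, (w' : V)⁆ := by
          rw [add_lie, smul_lie]
      _ = χ₀ ⟨y - f y • z, hmemay y⟩ • (w' : V) + f y • (c • (w' : V)) := by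
          rw [hmemW.mp hWw' ⟨y - f y • z, hmemay y⟩, hzw']
      _ = (χ₀ ⟨y - f y • z, hmemay y⟩ + f y * c) • (w' : V) := by
          rw [add_smul, smul_smul]

end LieTheorem

theorem nilpotent_radical_annihilates_irreducible
    (g : Type) [LieRing g] [LieAlgebra ℂ g] [FiniteDimensional ℂ g]
    (V : Type) [AddCommGroup V] [Module ℂ V] [LieRingModule g V] [LieModule ℂ g V]
    [FiniteDimensional ℂ V] [LieModule.IsIrreducible ℂ g V]
    (x : g) (hx : x ∈ ⁅(⊤ : LieIdeal ℂ g), LieAlgebra.radical ℂ g⁆)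
    (v : V) :
    ⁅x, v⁆ = 0 := by
  classical
  set r : LieIdeal ℂ g := LieAlgebra.radical ℂ g with hr
  haveI : Nontrivial V := LieModule.nontrivial_of_isIrreducible ℂ g V
  obtain ⟨χ, v0, hv0, heig⟩ := lie_theorem_aux (finrank ℂ r) r le_rfl V
  have heig' : ∀ a : r, ⁅(a : g), v0⁆ = χ a • v0 := fun a => by
    rw [← heig a, LieIdeal.coe_bracket_of_module]
  have hχ := weight_lie_eq_zero r χ v0 hv0 heig'
  set Wsub : Submodule ℂ V :=
    ⨅ (c : r), LinearMap.ker (LieModule.toEnd ℂ g V (c : g) - χ c • 1) with hWsub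
  have hmemW : ∀ {u : V}, u ∈ Wsub ↔ ∀ c : r, ⁅(c : g), u⁆ = χ c • u := by
    intro u
    simp only [hWsub, Submodule.mem_iInf, LinearMap.mem_ker, LinearMap.sub_apply,
      LieModule.toEnd_apply_apply, LinearMap.smul_apply, Module.End.one_apply, sub_eq_zero]
  have hWstab : ∀ {y : g} {u : V}, u ∈ Wsub → ⁅y, u⁆ ∈ Wsub := by
    intro y u hu
    rw [hmemW] at hu ⊢
    intro c
    have hmem1 : ⁅(c : g), y⁆ ∈ r := by
      rw [← lie_skew]
      exact neg_mem (r.lie_mem c.2)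
    set c' : r := ⟨⁅(c : g), y⁆, hmem1⟩ with hc'
    have hc'0 : χ c' = 0 := by
      refine hχ y (-c) c' ?_
      show ⁅(c : g), y⁆ = ⁅y, ((-c : r) : g)⁆
      have : ((-c : r) : g) = -(c : g) := rfl
      rw [this, lie_neg, lie_skew]
    calc ⁅(c : g), ⁅y, u⁆⁆ = ⁅⁅(c : g), y⁆, u⁆ + ⁅y, ⁅(c : g), u⁆⁆ := leibniz_lie _ _ _
      _ = χ c' • u + ⁅y, χ c • u⁆ := by
            have h1 : ⁅⁅(c : g), y⁆, u⁆ = χ c' • u := hu c'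
            rw [h1, hu c]
      _ = χ c • ⁅y, u⁆ := by rw [hc'0, zero_smul, zero_add, lie_smul]
  set W : LieSubmodule ℂ g V := { toSubmodule := Wsub, lie_mem := fun hu => hWstab hu } with hW
  have hWne : W ≠ ⊥ := by
    intro h
    have hv0W : v0 ∈ W := hmemW.mpr heig'
    rw [h] at hv0W
    exact hv0 (by simpa using hv0W)
  have hWtop : W = ⊤ := by
    rcases eq_bot_or_eq_top W with h | h
    · exact absurd h hWne
    · exact h
  have htop : ∀ (u : V) (c : r), ⁅(c : g), u⁆ = χ c • u := by
    intro u c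
    have hu : u ∈ W := by rw [hWtop]; exact LieSubmodule.mem_top u
    exact hmemW.mp hu c
  -- the annihilator ideal
  set S : LieIdeal ℂ g :=
    { toSubmodule := LinearMap.ker (LieModule.toEnd ℂ g V : g →ₗ[ℂ] Module.End ℂ V)
      lie_mem := by
        intro y m hm
        have hm' : LieModule.toEnd ℂ g V m = 0 := by
          have := LinearMap.mem_ker.mp (hm : m ∈ LinearMap.ker (LieModule.toEnd ℂ g V : g →ₗ[ℂ] Module.End ℂ V))
          simpa using this
        suffices h : (LieModule.toEnd ℂ g V : g →ₗ[ℂ] Module.End ℂ V) ⁅y, m⁆ = 0 from LinearMap.mem_ker.mpr h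
        have : LieModule.toEnd ℂ g V ⁅y, m⁆ = 0 := by
          ext u
          have hu1 : ∀ w : V, ⁅m, w⁆ = 0 := fun w => by simpa using LinearMap.congr_fun hm' w
          simp [LieModule.toEnd_apply_apply, lie_lie, hu1]
        simpa using this } with hS
  have hgen : ∀ (y m : g), m ∈ r → ⁅y, m⁆ ∈ S := by
    intro y m hm
    suffices h : (LieModule.toEnd ℂ g V : g →ₗ[ℂ] Module.End ℂ V) ⁅y, m⁆ = 0 from LinearMap.mem_ker.mpr h
    simp only [LieHom.coe_toLinearMap]
    ext u
    set b : r := ⟨⁅y, m⁆, r.lie_mem hm⟩ with hb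
    have hb0 : χ b = 0 := hχ y ⟨m, hm⟩ b rfl
    have : ⁅(b : g), u⁆ = χ b • u := htop u b
    rw [hb0, zero_smul] at this
    simpa [LieModule.toEnd_apply_apply, hb, lie_lie] using this
  have hle : ⁅(⊤ : LieIdeal ℂ g), r⁆ ≤ S := by
    rw [LieSubmodule.lieIdeal_oper_eq_span]
    rw [LieSubmodule.lieSpan_le]
    rintro - ⟨y, n, rfl⟩
    exact hgen (y : g) (n : g) n.2
  have hxS : x ∈ S := hle hx
  have h0 : (LieModule.toEnd ℂ g V : g →ₗ[ℂ] Module.End ℂ V) x = 0 :=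
    LinearMap.mem_ker.mp (hxS : x ∈ LinearMap.ker (LieModule.toEnd ℂ g V : g →ₗ[ℂ] Module.End ℂ V))
  have h1 := LinearMap.congr_fun h0 v
  simpa [LieModule.toEnd_apply_apply] using h1
end

section
/- Let X, k, p, z be nonnegative integers with p ≤ X + k and X ≤ z + p. Then the following identity holds in ℚ: Σ_{r=0}^{p} [C(X−r, z) · C(X, r) / C(X+k, p−r)] = [(X+k+1)/(X+k+1−p)] · C(X, z) / C(z+k+1, X+k+1−p), where C(n, j) denotes the binomial coefficient (with C(n, j) = 0 if j > n, and terms of the sum with r > X are interpreted as 0, so that the sum effectively runs over 0 ≤ r ≤ min(p, X−z)). -/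
open Finset

/-- subset-chain identity, valid for all naturals thanks to vanishing. -/
lemma choose_swap (X r z : ℕ) :
    X.choose r * (X - r).choose z = X.choose z * (X - z).choose r := by
  rcases le_or_gt (r + z) X with h | h
  · have h1 := Nat.choose_mul (n := X) (k := r + z) (s := r) (Nat.le_add_right _ _)
    have h2 := Nat.choose_mul (n := X) (k := r + z) (s := z) (Nat.le_add_left _ _)
    have h3 : (r + z).choose r = (r + z).choose z := Nat.choose_symm_add
    simp only [Nat.add_sub_cancel_left, Nat.add_sub_cancel] at h1 h2
    rw [← h1, h3, h2]
  · rcases le_or_gt r X with hr | hr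
    · rcases le_or_gt z X with hz | hz
      · rw [Nat.choose_eq_zero_of_lt (by omega : X - r < z),
          Nat.choose_eq_zero_of_lt (by omega : X - z < r)]
        ring
      · rw [Nat.choose_eq_zero_of_lt (by omega : X - r < z),
          Nat.choose_eq_zero_of_lt (by omega : X < z)]
        ring
    · rw [Nat.choose_eq_zero_of_lt (by omega : X < r),
        Nat.choose_eq_zero_of_lt (by omega : X - z < r)]
      ring

lemma core : ∀ m s q : ℕ,
    ∑ r ∈ range (m + s + 1), (m.choose r : ℚ) / ((m + s + q).choose (m + s - r) : ℚ)
      = ((m + s + q + 1 : ℚ) / (q + 1)) / (((s + q + 1).choose (q + 1) : ℕ) : ℚ) := by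
  intro m
  induction m with
  | zero =>
    intro s q
    rw [Finset.sum_eq_single 0]
    · have h1 : (s + q + 1) * (s + q).choose q = (s + q + 1).choose (q + 1) * (q + 1) :=
        Nat.add_one_mul_choose_eq (s + q) q
      have h4 : (s + q).choose q = (s + q).choose s :=
        Nat.choose_symm_of_eq_add (by ring)
      have hc1 : ((s + q).choose s : ℚ) ≠ 0 := by
        exact_mod_cast (Nat.choose_pos (Nat.le_add_right _ _)).ne'
      have hc2 : (((s + q + 1).choose (q + 1)) : ℚ) ≠ 0 := by
        exact_mod_cast (Nat.choose_pos (by omega)).ne'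
      simp only [Nat.zero_add, Nat.sub_zero, Nat.choose_zero_right, Nat.cast_one]
      have h1' : ((s : ℚ) + q + 1) * ((s + q).choose s : ℚ)
          = ((s + q + 1).choose (q + 1) : ℚ) * (q + 1) := by
        rw [← h4]; exact_mod_cast h1
      field_simp
      push_cast
      linarith [h1']
    · intro b _ hb
      rw [Nat.choose_eq_zero_of_lt (by omega : 0 < b)]
      simp
    · intro h
      exact absurd (Finset.mem_range.2 (by omega)) h
  | succ m ih =>
    intro s q
    -- rewrite the sum
    have key : ∑ r ∈ range (m + 1 + s + 1),
        ((m+1).choose r : ℚ) / (((m + 1 + s + q).choose (m + 1 + s - r) : ℕ) : ℚ)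
        = (∑ r ∈ range (m + s + 1), (m.choose r : ℚ) / (((m + s + (q+1)).choose (m + s - r) : ℕ) : ℚ))
          + (∑ r ∈ range (m + (s+1) + 1), (m.choose r : ℚ) / (((m + (s+1) + q).choose (m + (s+1) - r) : ℕ) : ℚ)) := by
      have e1 : m + 1 + s + 1 = (m + s + 1) + 1 := by ring
      rw [e1, Finset.sum_range_succ' (fun r => ((m+1).choose r : ℚ) / (((m + 1 + s + q).choose (m + 1 + s - r) : ℕ) : ℚ)) (m + s + 1)]
      have e2 : m + (s+1) + 1 = (m + s + 1) + 1 := by ring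
      rw [e2, Finset.sum_range_succ' (fun r => ((m).choose r : ℚ) / (((m + (s+1) + q).choose (m + (s+1) - r) : ℕ) : ℚ)) (m + s + 1)]
      have hterm : ∀ i ∈ range (m + s + 1),
          ((m+1).choose (i+1) : ℚ) / (((m + 1 + s + q).choose (m + 1 + s - (i+1)) : ℕ) : ℚ)
          = (m.choose i : ℚ) / (((m + s + (q+1)).choose (m + s - i) : ℕ) : ℚ)
            + (m.choose (i+1) : ℚ) / (((m + (s+1) + q).choose (m + (s+1) - (i+1)) : ℕ) : ℚ) := by
        intro i hi
        have hA : m + 1 + s + q = m + s + (q + 1) := by ring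
        have hB : m + 1 + s - (i+1) = m + s - i := by omega
        have hC : m + (s+1) + q = m + s + (q+1) := by ring
        have hD : m + (s+1) - (i+1) = m + s - i := by omega
        rw [hA, hB, hC, hD, Nat.choose_succ_succ', Nat.cast_add, add_div]
      rw [Finset.sum_congr rfl hterm, Finset.sum_add_distrib]
      have hE : m + 1 + s + q = m + (s+1) + q := by ring
      have hF : m + 1 + s - 0 = m + (s+1) - 0 := by omega
      rw [Nat.choose_zero_right, Nat.choose_zero_right, hE, hF]
      push_cast
      ring
    rw [key, ih s (q+1), ih (s+1) q]
    -- now the T identity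
    have h1 : (s + q + 2) * (s + q + 1).choose (q + 1) = (s + q + 2).choose (q + 2) * (q + 2) :=
      Nat.add_one_mul_choose_eq (s + q + 1) (q + 1)
    have h2 : (s + q + 2) * (s + q + 1).choose s = (s + q + 2).choose (s + 1) * (s + 1) :=
      Nat.add_one_mul_choose_eq (s + q + 1) s
    have h3 : (s + q + 1).choose s = (s + q + 1).choose (q + 1) :=
      Nat.choose_symm_of_eq_add (by ring)
    have h4 : (s + q + 2).choose (s + 1) = (s + q + 2).choose (q + 1) :=
      Nat.choose_symm_of_eq_add (by ring)
    rw [h3, h4] at h2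
    have hc1 : (((s + q + 1).choose (q + 1) : ℕ) : ℚ) ≠ 0 := by
      exact_mod_cast (Nat.choose_pos (by omega)).ne'
    have hc2 : (((s + q + 2).choose (q + 2) : ℕ) : ℚ) ≠ 0 := by
      exact_mod_cast (Nat.choose_pos (by omega)).ne'
    have hc3 : (((s + q + 2).choose (q + 1) : ℕ) : ℚ) ≠ 0 := by
      exact_mod_cast (Nat.choose_pos (by omega)).ne'
    have h1' : ((s : ℚ) + q + 2) * ((s + q + 1).choose (q + 1) : ℚ)
        = ((s + q + 2).choose (q + 2) : ℚ) * ((q : ℚ) + 2) := by exact_mod_cast h1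
    have h2' : ((s : ℚ) + q + 2) * ((s + q + 1).choose (q + 1) : ℚ)
        = ((s + q + 2).choose (q + 1) : ℚ) * ((s : ℚ) + 1) := by exact_mod_cast h2
    have hQ : m + s + (q + 1) + 1 = m + 1 + s + q + 1 := by ring
    have hS : m + (s + 1) + q + 1 = m + 1 + s + q + 1 := by ring
    have hq1 : ((q : ℚ) + 1) ≠ 0 := by positivity
    have hq2 : ((q : ℚ) + 1 + 1) ≠ 0 := by positivity
    have e1 : s + (q + 1) + 1 = s + q + 2 := by ring
    have e2 : s + 1 + q + 1 = s + q + 2 := by ring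
    have e3 : q + 1 + 1 = q + 2 := by ring
    rw [e1, e2, e3]
    have hs1 : ((s : ℚ) + 1) ≠ 0 := by positivity
    have hq2' : ((q : ℚ) + 2) ≠ 0 := by positivity
    have hB : (((s + q + 2).choose (q + 2) : ℕ) : ℚ)
        = ((s : ℚ) + q + 2) * (((s + q + 1).choose (q + 1) : ℕ) : ℚ) / ((q : ℚ) + 2) := by
      field_simp
      linarith [h1']
    have hD : (((s + q + 2).choose (q + 1) : ℕ) : ℚ)
        = ((s : ℚ) + q + 2) * (((s + q + 1).choose (q + 1) : ℕ) : ℚ) / ((s : ℚ) + 1) := by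
      field_simp
      linarith [h2']
    rw [hB, hD]
    push_cast
    field_simp
    ring

theorem binomial_sum_identity (X k p z : ℕ) (hp : p ≤ X + k) (hX : X ≤ z + p) :
    ∑ r ∈ Finset.range (p + 1),
        ((X - r).choose z * X.choose r : ℚ) / ((X + k).choose (p - r) : ℚ)
      = ((X + k + 1 : ℚ) / ((X + k + 1 - p : ℕ) : ℚ)) * (X.choose z : ℚ)
          / (((z + k + 1).choose (X + k + 1 - p) : ℕ) : ℚ) := by
  rcases le_or_gt z X with hz | hz
  · set m := X - z with hm
    set s := p - m with hs
    set q := X + k - p with hq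
    have hms : m + s = p := by omega
    have hmsq : m + s + q = X + k := by omega
    have hsq : s + q + 1 = z + k + 1 := by omega
    have hq1 : q + 1 = X + k + 1 - p := by omega
    have hcore := core m s q
    rw [hmsq] at hcore
    rw [hms] at hcore
    rw [hsq, hq1] at hcore
    have hnum : ((m : ℚ) + s + q + 1) = ((X : ℚ) + k + 1) := by
      have h := hmsq
      have : ((m + s + q + 1 : ℕ) : ℚ) = ((X + k + 1 : ℕ) : ℚ) := by rw [h]
      push_cast at this; linarith
    have hden : ((q : ℚ) + 1) = ((X + k + 1 - p : ℕ) : ℚ) := by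
      rw [← hq1]; push_cast; ring
    rw [hnum, hden] at hcore
    have hL : ∑ r ∈ Finset.range (p + 1),
        ((X - r).choose z * X.choose r : ℚ) / ((X + k).choose (p - r) : ℚ)
        = (X.choose z : ℚ) * ∑ r ∈ range (p + 1),
            (m.choose r : ℚ) / ((X + k).choose (p - r) : ℚ) := by
      rw [Finset.mul_sum]
      apply Finset.sum_congr rfl
      intro r _
      have h := choose_swap X r z
      have hcast : ((X - r).choose z * X.choose r : ℚ)
          = (X.choose z : ℚ) * ((X - z).choose r : ℚ) := by
        exact_mod_cast (Nat.mul_comm ((X - r).choose z) (X.choose r)).trans h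
      rw [hcast, mul_div_assoc, hm]
    rw [hL, hcore]
    ring
  · have hLz : ∀ r ∈ Finset.range (p + 1),
        ((X - r).choose z * X.choose r : ℚ) / ((X + k).choose (p - r) : ℚ) = 0 := by
      intro r _
      rw [Nat.choose_eq_zero_of_lt (by omega : X - r < z)]
      simp
    rw [Finset.sum_congr rfl hLz, Nat.choose_eq_zero_of_lt (by omega : X < z)]
    simp
end
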